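/- For every real number x > 0, tanh(x) > x/(1 + x^2/3), i.e. tanh(x)(1 + x^2/3) > x. -/

import Mathlib

/-!
Multiplying by `cosh x > 0`, the claim is `x cosh x < sinh x (1 + x²/3)`. Both sides vanish at `0`,
and the derivative of their difference is `(x/3) (x cosh x - sinh x)`; this is positive because
`x cosh x - sinh x` itself vanishes at `0` and has derivative `x sinh x > 0`.
-/

open Real

lemma pos_of_hasDerivAt_of_deriv_pos {f f' : ℝ → ℝ} (hf : ∀ y, HasDerivAt f (f' y) y)
    (hf₀ : f 0 = 0) (hf' : ∀ y, 0 < y → 0 < f' y) {x : ℝ} (hx : 0 < x) : 0 < f x := by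
  have hmono : StrictMonoOn f (Set.Ici 0) := by
    refine strictMonoOn_of_hasDerivWithinAt_pos (convex_Ici 0)
      (fun y _ => (hf y).continuousAt.continuousWithinAt) (fun y _ => (hf y).hasDerivWithinAt) ?_
    rw [interior_Ici]
    exact hf'
  simpa [hf₀] using hmono Set.self_mem_Ici (Set.mem_Ici.2 hx.le) hx

lemma sinh_lt_mul_cosh {x : ℝ} (hx : 0 < x) : sinh x < x * cosh x := by
  have hderiv (y : ℝ) : HasDerivAt (fun y => y * cosh y - sinh y) (y * sinh y) y := by
    refine (((hasDerivAt_id' y).fun_mul (hasDerivAt_cosh y)).fun_sub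
      (hasDerivAt_sinh y)).congr_deriv ?_
    ring
  have := pos_of_hasDerivAt_of_deriv_pos hderiv (by simp)
    (fun y hy => mul_pos hy (sinh_pos_iff.2 hy)) hx
  linarith

lemma mul_cosh_lt_sinh_mul {x : ℝ} (hx : 0 < x) : x * cosh x < sinh x * (1 + x ^ 2 / 3) := by
  have hderiv (y : ℝ) : HasDerivAt (fun y => sinh y * (1 + y ^ 2 / 3) - y * cosh y)
      (y / 3 * (y * cosh y - sinh y)) y := by
    refine (((hasDerivAt_sinh y).fun_mul (((hasDerivAt_pow 2 y).div_const 3).const_add 1)).fun_sub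
      ((hasDerivAt_id' y).fun_mul (hasDerivAt_cosh y))).congr_deriv ?_
    ring
  have := pos_of_hasDerivAt_of_deriv_pos hderiv (by simp)
    (fun y hy => mul_pos (by positivity) (sub_pos.2 (sinh_lt_mul_cosh hy))) hx
  linarith

theorem stmt_2 : ∀ x : ℝ, 0 < x →
    x < Real.tanh x * (1 + x ^ 2 / 3) := by
  intro x hx
  rw [tanh_eq_sinh_div_cosh, div_mul_eq_mul_div, lt_div_iff₀ (cosh_pos x)]
  exact mul_cosh_lt_sinh_mul hx
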